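/- Let L : M_n(ℂ) → M_n(ℂ) be a linear map that preserves the real subspace of traceless Hermitian matrices, and let g > 0 be such that for every traceless Hermitian X and every t ≥ 0, ‖exp(tL)(X)‖₁ ≤ e^{−gt}·‖X‖₁. Then for every traceless Hermitian matrix δρ, g·‖δρ‖₁ ≤ ‖L(δρ)‖₁. In particular, if δρ is traceless Hermitian and satisfies the Poisson-type equation L(δρ) = −b for some matrix b, then ‖δρ‖₁ ≤ (1/g)·‖b‖₁. -/

import Mathlib

open scoped ComplexOrder

attribute [local instance] Matrix.normedAddCommGroup Matrix.normedSpace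

/-- The trace norm of a matrix: `‖A‖₁ = Tr √(Aᴴ A)`.  For a Hermitian matrix this is
the sum of the absolute values of its eigenvalues. -/
noncomputable def traceNorm {n : ℕ} (A : Matrix (Fin n) (Fin n) ℂ) : ℝ :=
  ((Matrix.posSemidef_conjTranspose_mul_self A).1.eigenvectorUnitary.1 *
    Matrix.diagonal (((↑) : ℝ → ℂ) ∘ Real.sqrt ∘ (Matrix.posSemidef_conjTranspose_mul_self A).1.eigenvalues) *
    (star (Matrix.posSemidef_conjTranspose_mul_self A).1.eigenvectorUnitary :
      Matrix (Fin n) (Fin n) ℂ)).trace.re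

/-!
For traceless Hermitian `δρ` let `S` be the sign of `δρ`: a unitary with `Re tr(S δρ) = ‖δρ‖₁`.
The trace-norm Hölder inequality `|tr(S Y)| ≤ ‖Y‖₁` (Cauchy–Schwarz in an eigenbasis of `Yᴴ Y`)
shows that `f t = Re tr(S e^{tL} δρ)` stays below `e^{-gt} ‖δρ‖₁` for `t ≥ 0` and touches it at
`t = 0`. Comparing derivatives at `0` gives `g ‖δρ‖₁ ≤ -Re tr(S L δρ)`, and Hölder once more
bounds the right-hand side by `‖L δρ‖₁`.
-/

open Matrix

section Semigroup

theorem le_of_hasDerivAt_of_le_on_Ici {f h : ℝ → ℝ} {f' h' x : ℝ} (hf : HasDerivAt f f' x)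
    (hh : HasDerivAt h h' x) (hx : f x = h x) (hle : ∀ t, x ≤ t → f t ≤ h t) : f' ≤ h' := by
  have hmin : IsLocalMinOn (h - f) (Set.Ici x) x :=
    Filter.eventually_of_mem self_mem_nhdsWithin fun t ht => by
      simpa [hx] using hle t ht
  simpa using hmin.hasFDerivWithinAt_nonneg (hh.sub hf).hasFDerivAt.hasFDerivWithinAt
    (y := 1) (mem_posTangentConeAt_of_segment_subset (by simp [Set.Icc_subset_Ici_self]))

variable {E : Type*} [NormedAddCommGroup E] [NormedSpace ℂ E] [CompleteSpace E]

theorem hasDerivAt_exp_ofReal_smul_apply_zero (L : E →L[ℂ] E) (X : E) :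
    HasDerivAt (fun u : ℝ => NormedSpace.exp ((u : ℂ) • L) X) (L X) 0 := by
  have hC := (hasDerivAt_exp_smul_const (𝕂 := ℂ) L ((0 : ℝ) : ℂ)).scomp 0
    Complex.ofRealCLM.hasDerivAt
  simpa [Function.comp_def] using
    ((ContinuousLinearMap.apply ℂ E X).restrictScalars ℝ).hasFDerivAt.comp_hasDerivAt 0 hC

theorem mul_le_neg_apply_of_exp_smul_decay (L : E →L[ℂ] E) (φ : E →L[ℝ] ℝ) (N : E → ℝ)
    {X : E} {g : ℝ} (hφ : ∀ Y, φ Y ≤ N Y) (hX : φ X = N X)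
    (hdecay : ∀ t : ℝ, 0 ≤ t → N (NormedSpace.exp ((t : ℂ) • L) X) ≤ Real.exp (-g * t) * N X) :
    g * N X ≤ -φ (L X) := by
  have hrate : HasDerivAt (fun t : ℝ => Real.exp (-g * t) * N X) (-g * N X) 0 := by
    simpa using ((hasDerivAt_id (0 : ℝ)).const_mul (-g)).exp.mul_const (N X)
  have hslope := le_of_hasDerivAt_of_le_on_Ici
    (φ.hasFDerivAt.comp_hasDerivAt 0 (hasDerivAt_exp_ofReal_smul_apply_zero L X)) hrate
    (by simp [hX]) fun t ht => (hφ _).trans (hdecay t ht)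
  linarith

end Semigroup

namespace Matrix

variable {𝕜 : Type*} [RCLike 𝕜]

theorem sum_norm_sq_row_eq_re_mul_conjTranspose {l m : Type*} [Fintype m] (M : Matrix l m 𝕜)
    (i : l) : ∑ j, ‖M i j‖ ^ 2 = RCLike.re ((M * Mᴴ) i i) := by
  simp [mul_apply, RCLike.mul_conj]

theorem sum_norm_sq_col_eq_re_conjTranspose_mul {l m : Type*} [Fintype l] (M : Matrix l m 𝕜)
    (j : m) : ∑ i, ‖M i j‖ ^ 2 = RCLike.re ((Mᴴ * M) j j) := by
  simpa using Mᴴ.sum_norm_sq_row_eq_re_mul_conjTranspose j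

theorem norm_trace_mul_le_sum_sqrt {m : Type*} [Fintype m] [DecidableEq m] {T : Matrix m m 𝕜}
    (hT : T ∈ unitaryGroup m 𝕜) (C : Matrix m m 𝕜) :
    ‖(T * C).trace‖ ≤ ∑ i, √(RCLike.re ((Cᴴ * C) i i)) := by
  have hrows : ∀ i, ∑ j, ‖T i j‖ ^ 2 = 1 := fun i => by
    simp [T.sum_norm_sq_row_eq_re_mul_conjTranspose, ← star_eq_conjTranspose,
      Unitary.mul_star_self_of_mem hT]
  calc ‖(T * C).trace‖ = ‖∑ i, ∑ j, T i j * C j i‖ := by simp only [trace, diag, mul_apply]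
    _ ≤ ∑ i, ∑ j, ‖T i j‖ * ‖C j i‖ := by
      refine (norm_sum_le _ _).trans (Finset.sum_le_sum fun i _ => ?_)
      exact (norm_sum_le _ _).trans_eq (by simp only [norm_mul])
    _ ≤ ∑ i, √(∑ j, ‖T i j‖ ^ 2) * √(∑ j, ‖C j i‖ ^ 2) :=
      Finset.sum_le_sum fun i _ => Real.sum_mul_le_sqrt_mul_sqrt _ _ _
    _ = ∑ i, √(RCLike.re ((Cᴴ * C) i i)) := by
      simp [hrows, C.sum_norm_sq_col_eq_re_conjTranspose_mul]

noncomputable def reTraceMul {m : Type*} [Fintype m] (S : Matrix m m ℂ) :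
    Matrix m m ℂ →L[ℝ] ℝ :=
  Complex.reCLM.comp ((LinearMap.toContinuousLinearMap
    (traceLinearMap m ℂ ℂ ∘ₗ LinearMap.mulLeft ℂ S)).restrictScalars ℝ)

theorem reTraceMul_apply {m : Type*} [Fintype m] (S A : Matrix m m ℂ) :
    reTraceMul S A = (S * A).trace.re := rfl

end Matrix

section TraceNorm

variable {n : ℕ}

theorem traceNorm_eq_re_trace_cfc_sqrt (A : Matrix (Fin n) (Fin n) ℂ) :
    traceNorm A = (cfc Real.sqrt (Aᴴ * A)).trace.re := by
  rw [(posSemidef_conjTranspose_mul_self A).1.cfc_eq, IsHermitian.cfc,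
    Unitary.conjStarAlgAut_apply]
  rfl

theorem traceNorm_neg (A : Matrix (Fin n) (Fin n) ℂ) : traceNorm (-A) = traceNorm A := by
  simp [traceNorm_eq_re_trace_cfc_sqrt]

theorem traceNorm_eq_sum_sqrt_eigenvalues (A : Matrix (Fin n) (Fin n) ℂ) :
    traceNorm A = ∑ i, √((posSemidef_conjTranspose_mul_self A).1.eigenvalues i) := by
  rw [traceNorm, trace_mul_cycle, Unitary.coe_star_mul_self, one_mul, trace_diagonal]
  simp

theorem norm_trace_mul_le_traceNorm {S : Matrix (Fin n) (Fin n) ℂ}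
    (hS : S ∈ unitaryGroup (Fin n) ℂ) (A : Matrix (Fin n) (Fin n) ℂ) :
    ‖(S * A).trace‖ ≤ traceNorm A := by
  set hAA := (posSemidef_conjTranspose_mul_self A).1
  set U : Matrix (Fin n) (Fin n) ℂ := (hAA.eigenvectorUnitary : Matrix (Fin n) (Fin n) ℂ)
  have hU : U ∈ unitaryGroup (Fin n) ℂ := hAA.eigenvectorUnitary.2
  have hconj : ((star U * S) * (A * U)).trace = (S * A).trace := by
    rw [mul_assoc, trace_mul_comm (star U), mul_assoc, mul_assoc, Unitary.mul_star_self_of_mem hU,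
      mul_one]
  have hdiag : (A * U)ᴴ * (A * U) = diagonal (RCLike.ofReal ∘ hAA.eigenvalues) := by
    rw [← hAA.conjStarAlgAut_star_eigenvectorUnitary, Unitary.conjStarAlgAut_star_apply,
      conjTranspose_mul, ← star_eq_conjTranspose]
    simp only [mul_assoc]
    rfl
  rw [← hconj, traceNorm_eq_sum_sqrt_eigenvalues]
  refine (norm_trace_mul_le_sum_sqrt (mul_mem (Unitary.star_mem hU) hS) _).trans_eq ?_
  simp only [hdiag, diagonal_apply_eq, Function.comp_apply, RCLike.ofReal_re]

theorem reTraceMul_le_traceNorm {S : Matrix (Fin n) (Fin n) ℂ}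
    (hS : S ∈ unitaryGroup (Fin n) ℂ) (A : Matrix (Fin n) (Fin n) ℂ) :
    reTraceMul S A ≤ traceNorm A :=
  (Complex.re_le_norm _).trans (norm_trace_mul_le_traceNorm hS A)

theorem Matrix.IsHermitian.exists_unitary_re_trace_mul_eq_traceNorm
    {A : Matrix (Fin n) (Fin n) ℂ} (hA : A.IsHermitian) :
    ∃ S ∈ unitaryGroup (Fin n) ℂ, (S * A).trace.re = traceNorm A := by
  -- `sgn 0 = 1` rather than `0`, so that `cfc sgn A` is unitary even when `A` is singular.
  let sgn : ℝ → ℝ := fun x => if 0 ≤ x then 1 else -1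
  have hcont : ∀ f : ℝ → ℝ, ContinuousOn f (spectrum ℝ A) :=
    A.finite_real_spectrum.continuousOn
  have hsq : cfc sgn A * cfc sgn A = 1 := by
    rw [← cfc_mul sgn sgn A (hcont _) (hcont _), ← cfc_one ℝ A]
    congr 1
    funext x
    simp only [sgn, Pi.one_apply]
    split_ifs <;> norm_num
  have hstar : star (cfc sgn A) = cfc sgn A := (cfc_predicate sgn A).star_eq
  refine ⟨cfc sgn A, Unitary.mem_iff.2 ⟨by rw [hstar, hsq], by rw [hstar, hsq]⟩, ?_⟩
  have habs : cfc sgn A * A = cfc (fun x : ℝ => |x|) A := calc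
    cfc sgn A * A = cfc sgn A * cfc (fun x : ℝ => x) A := by rw [cfc_id' ℝ A]
    _ = cfc (fun x : ℝ => sgn x * x) A := (cfc_mul _ _ A (hcont _) (hcont _)).symm
    _ = cfc (fun x : ℝ => |x|) A := by
      congr 1
      funext x
      simp only [sgn]
      split_ifs with hx
      · rw [one_mul, abs_of_nonneg hx]
      · rw [neg_one_mul, abs_of_neg (not_le.1 hx)]
  rw [habs, traceNorm_eq_re_trace_cfc_sqrt, hA.eq, ← sq, ← cfc_comp_pow Real.sqrt 2 A]
  simp only [Real.sqrt_sq_eq_abs]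

end TraceNorm

theorem gap_controlled_sensitivity_bound_general {n : ℕ}
    (L : Matrix (Fin n) (Fin n) ℂ →L[ℂ] Matrix (Fin n) (Fin n) ℂ)
    (g : ℝ) (hg : 0 < g)
    (hdecay : ∀ X : Matrix (Fin n) (Fin n) ℂ, X.IsHermitian → X.trace = 0 →
      ∀ t : ℝ, 0 ≤ t →
        traceNorm ((@NormedSpace.exp _ _ _
            (@NonUnitalSeminormedRing.toIsTopologicalRing _
              (@ContinuousLinearMap.toNormedRing ℂ _ _ _ _).toSeminormedRing.toNonUnitalSeminormedRing) ((t : ℂ) • L)) X) ≤ Real.exp (-g * t) * traceNorm X) :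
    (∀ δρ : Matrix (Fin n) (Fin n) ℂ, δρ.IsHermitian → δρ.trace = 0 →
        g * traceNorm δρ ≤ traceNorm (L δρ)) ∧
    (∀ δρ b : Matrix (Fin n) (Fin n) ℂ, δρ.IsHermitian → δρ.trace = 0 →
        L δρ = -b → traceNorm δρ ≤ (1 / g) * traceNorm b) := by
  have gap : ∀ δρ : Matrix (Fin n) (Fin n) ℂ, δρ.IsHermitian → δρ.trace = 0 →
      g * traceNorm δρ ≤ traceNorm (L δρ) := by
    intro δρ hH h0
    obtain ⟨S, hS, hSδ⟩ := hH.exists_unitary_re_trace_mul_eq_traceNorm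
    have hslope := mul_le_neg_apply_of_exp_smul_decay L (reTraceMul S) traceNorm
      (reTraceMul_le_traceNorm hS) ((reTraceMul_apply S δρ).trans hSδ) (hdecay δρ hH h0)
    have hholder := reTraceMul_le_traceNorm hS (-L δρ)
    rw [map_neg, traceNorm_neg] at hholder
    exact hslope.trans hholder
  refine ⟨gap, fun δρ b hH h0 hb => ?_⟩
  have hgap := gap δρ hH h0
  rw [hb, traceNorm_neg] at hgap
  rw [one_div_mul_eq_div, le_div_iff₀ hg]
  linarith

/-- Gap-controlled sensitivity bound: if the semigroup `exp(tL)` decays at rate `g` in trace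
norm on the traceless Hermitian subspace, then `g‖δρ‖₁ ≤ ‖L(δρ)‖₁`; in particular any
traceless Hermitian solution of the Poisson-type equation `L(δρ) = −b` satisfies
`‖δρ‖₁ ≤ (1/g)‖b‖₁`. -/
theorem gap_controlled_sensitivity_bound {n : ℕ}
    (L : Matrix (Fin n) (Fin n) ℂ →L[ℂ] Matrix (Fin n) (Fin n) ℂ)
    (hL_preserve : ∀ X : Matrix (Fin n) (Fin n) ℂ, X.IsHermitian → X.trace = 0 →
      (L X).IsHermitian ∧ (L X).trace = 0)
    (g : ℝ) (hg : 0 < g)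
    (hdecay : ∀ X : Matrix (Fin n) (Fin n) ℂ, X.IsHermitian → X.trace = 0 →
      ∀ t : ℝ, 0 ≤ t →
        traceNorm ((@NormedSpace.exp _ _ _
            (@NonUnitalSeminormedRing.toIsTopologicalRing _
              (@ContinuousLinearMap.toNormedRing ℂ _ _ _ _).toSeminormedRing.toNonUnitalSeminormedRing) ((t : ℂ) • L)) X) ≤ Real.exp (-g * t) * traceNorm X) :
    (∀ δρ : Matrix (Fin n) (Fin n) ℂ, δρ.IsHermitian → δρ.trace = 0 →
        g * traceNorm δρ ≤ traceNorm (L δρ)) ∧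
    (∀ δρ b : Matrix (Fin n) (Fin n) ℂ, δρ.IsHermitian → δρ.trace = 0 →
        L δρ = -b → traceNorm δρ ≤ (1 / g) * traceNorm b) :=
  gap_controlled_sensitivity_bound_general L g hg hdecay
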